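/- Let F be a field of positive characteristic, g ∈ GL(d,F) of infinite order, and C the centralizer of g in GL(d,F). Then there exists a group homomorphism φ: C → F̄* (where F̄ is the algebraic closure of F) such that φ(g) has infinite order. -/

import Mathlib

/-!
Extend scalars to `K = F̄` and view `g` as an endomorphism of `K^d`. In characteristic `p` a
unipotent endomorphism has `p`-power order, so if every eigenvalue of `g` were a root of unity,
some power of `g` would be `1`. Hence `g` has an eigenvalue `μ` of infinite order. The centralizer
of `g` preserves the `μ`-eigenspace `E`, and `h ↦ det (h|_E)` is a homomorphism to `Kˣ` sending `g`
to `μ ^ dim E`.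
-/

open Module Module.End Polynomial

theorem isOfFinOrder_of_isNilpotent_sub_one {R : Type*} [Ring R] (p : ℕ) [Fact p.Prime]
    [CharP R p] {x : R} (h : IsNilpotent (x - 1)) : IsOfFinOrder x := by
  obtain ⟨n, hn⟩ := h
  refine isOfFinOrder_iff_pow_eq_one.mpr ⟨p ^ n, pow_pos (Fact.out : p.Prime).pos n, ?_⟩
  rw [← sub_eq_zero, ← one_pow (p ^ n), ← sub_pow_expChar_pow_of_commute p n (Commute.one_right x),
    pow_eq_zero_of_le (Nat.lt_pow_self (Fact.out : p.Prime).one_lt).le hn]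

namespace Module.End

variable {K V : Type*} [Field K] [AddCommGroup V] [Module K V]

theorem isNilpotent_pow_sub_one [IsAlgClosed K] [FiniteDimensional K V] {f : End K V} {N : ℕ}
    (h : ∀ μ, f.HasEigenvalue μ → μ ^ N = 1) : IsNilpotent (f ^ N - 1) := by
  set q := minpoly K f
  have hdvd : q ∣ (X ^ N - 1 : K[X]) ^ q.roots.card := calc
    q = (q.roots.map fun μ ↦ X - C μ).prod :=
      (prod_multiset_X_sub_C_of_monic_of_roots_card_eq
        (minpoly.monic (Algebra.IsIntegral.isIntegral f)) IsAlgClosed.card_roots_eq_natDegree).symm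
    _ ∣ (q.roots.map fun _ ↦ (X ^ N - 1 : K[X])).prod :=
      Multiset.prod_dvd_prod_of_dvd _ _ fun μ hμ ↦ by
        rw [dvd_iff_isRoot, IsRoot, eval_sub, eval_pow, eval_X, eval_one, sub_eq_zero]
        exact h μ (hasEigenvalue_of_isRoot (isRoot_of_mem_roots hμ))
    _ = (X ^ N - 1) ^ q.roots.card := by simp
  exact ⟨q.roots.card, by simpa using minpoly.dvd_iff.mp hdvd⟩

theorem exists_hasEigenvalue_not_isOfFinOrder [IsAlgClosed K] [FiniteDimensional K V] (p : ℕ)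
    [Fact p.Prime] [CharP K p] {f : End K V} (hf : ¬IsOfFinOrder f) :
    ∃ μ, f.HasEigenvalue μ ∧ ¬IsOfFinOrder μ := by
  by_contra! h
  have : Nontrivial (End K V) := by
    by_contra!
    exact hf (isOfFinOrder_iff_pow_eq_one.mpr ⟨1, one_pos, Subsingleton.elim _ _⟩)
  have : CharP (End K V) p := charP_of_injective_algebraMap (algebraMap K (End K V)).injective p
  set S := (finite_hasEigenvalue f).toFinset
  have hN : 0 < ∏ μ ∈ S, orderOf μ :=
    Finset.prod_pos fun μ hμ ↦ (h μ (by simpa [S] using hμ)).orderOf_pos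
  have hpow : ∀ μ, f.HasEigenvalue μ → μ ^ ∏ μ ∈ S, orderOf μ = 1 := fun μ hμ ↦
    orderOf_dvd_iff_pow_eq_one.mp (Finset.dvd_prod_of_mem _ (by simpa [S] using hμ))
  have := isOfFinOrder_of_isNilpotent_sub_one p (isNilpotent_pow_sub_one hpow)
  exact hf ((isOfFinOrder_pow.mp this).resolve_right hN.ne')

theorem mapsTo_eigenspace_of_mem_centralizer {f g : End K V} (hg : g ∈ Submonoid.centralizer {f})
    (μ : K) : Set.MapsTo g (f.eigenspace μ) (f.eigenspace μ) :=
  mapsTo_genEigenspace_of_comm (Submonoid.mem_centralizer_iff.mp hg f rfl) μ 1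

noncomputable def eigenspaceDet (f : End K V) (μ : K) : Submonoid.centralizer {f} →* K where
  toFun g := LinearMap.det ((g : End K V).restrict (mapsTo_eigenspace_of_mem_centralizer g.2 μ))
  map_one' := map_one LinearMap.det
  map_mul' _ _ := by rw [← map_mul]; rfl

theorem eigenspaceDet_apply (f : End K V) (μ : K) (g : Submonoid.centralizer {f}) :
    f.eigenspaceDet μ g =
      LinearMap.det ((g : End K V).restrict (mapsTo_eigenspace_of_mem_centralizer g.2 μ)) :=
  rfl

theorem eigenspaceDet_self [FiniteDimensional K V] (f : End K V) (μ : K) :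
    f.eigenspaceDet μ ⟨f, Submonoid.mem_centralizer_iff.mpr fun _ h ↦ h ▸ rfl⟩ =
      μ ^ finrank K (f.eigenspace μ) := by
  have : f.restrict (mapsTo_genEigenspace_of_comm (Commute.refl f) μ 1) = μ • 1 :=
    LinearMap.ext fun v ↦ Subtype.ext (mem_eigenspace_iff.mp v.2)
  rw [eigenspaceDet_apply, this, LinearMap.det_smul, map_one, mul_one]

theorem exists_centralizer_hom_not_isOfFinOrder [IsAlgClosed K] [FiniteDimensional K V]
    (p : ℕ) [Fact p.Prime] [CharP K p] {G : Type*} [Group G] (ρ : G →* End K V) {g : G} (hg : ¬IsOfFinOrder (ρ g)) :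
    ∃ φ : Subgroup.centralizer {g} →* Kˣ,
      ¬IsOfFinOrder (φ ⟨g, Subgroup.mem_centralizer_singleton_iff.mpr rfl⟩) := by
  obtain ⟨μ, hμ, hμ_inf⟩ := exists_hasEigenvalue_not_isOfFinOrder p hg
  have : Nontrivial ((ρ g).eigenspace μ) := Submodule.nontrivial_iff_ne_bot.mpr hμ
  let ι : Subgroup.centralizer {g} →* Submonoid.centralizer {ρ g} :=
    (ρ.comp (Subgroup.centralizer {g}).subtype).codRestrict _ fun x ↦
      Submonoid.mem_centralizer_iff.mpr fun _ h ↦ h ▸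
        Commute.map (Subgroup.mem_centralizer_singleton_iff.mp x.2).symm ρ
  refine ⟨(((ρ g).eigenspaceDet μ).comp ι).toHomUnits, ?_⟩
  rw [← Units.isOfFinOrder_val, MonoidHom.coe_toHomUnits]
  change ¬IsOfFinOrder ((ρ g).eigenspaceDet μ ⟨ρ g, _⟩)
  rw [eigenspaceDet_self, isOfFinOrder_pow, not_or]
  exact ⟨hμ_inf, finrank_pos.ne'⟩

end Module.End

theorem stmt_9 (F : Type*) [Field F] (p : ℕ) [CharP F p] (hp : 0 < p)
    (d : ℕ) (g : GL (Fin d) F) (hg : ¬ IsOfFinOrder g)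
    (hmem : g ∈ Subgroup.centralizer ({g} : Set (GL (Fin d) F))) :
    ∃ φ : Subgroup.centralizer ({g} : Set (GL (Fin d) F)) →* (AlgebraicClosure F)ˣ,
      ¬ IsOfFinOrder (φ ⟨g, hmem⟩) := by
  have : Fact p.Prime := ⟨CharP.char_prime_of_ne_zero F hp.ne'⟩
  let ρ : GL (Fin d) F →* End (AlgebraicClosure F) (Fin d → AlgebraicClosure F) :=
    (Matrix.toLinAlgEquiv'.toRingEquiv.toRingHom.comp
      (algebraMap F (AlgebraicClosure F)).mapMatrix).toMonoidHom.comp (Units.coeHom _)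
  have hρ : Function.Injective ρ :=
    Matrix.toLinAlgEquiv'.injective.comp
      ((Matrix.map_injective (algebraMap F _).injective).comp Units.val_injective)
  exact exists_centralizer_hom_not_isOfFinOrder p ρ (hρ.isOfFinOrder_iff.not.mpr hg)
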